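/- Let Σ be a varietor on C with free Σ-algebras (Σ◇X, α_X), let S be a monad on C with Kleisli adjunction J ⊣ V, and let Σ̄ be an extension of Σ to Kl(S) with distributive law λ. For every (Σ,S)-tree automaton (Q,δ,i,o), the language of its determinisation (SQ, δ̄, i, ō) as a Σ-tree automaton in C (with input object I and output object SO) equals the language of (Q,δ,i,o) as a Σ̄-tree automaton in Kl(S), viewed as a morphism Σ◇I → SO in C. -/

import Mathlib

/-!
The reachability map `Σ◇I ⇸ Q` of the automaton in `Kl(S)` is a `C`-morphism
`r : Σ◇I ⟶ SQ`. Its `Σ̄`-homomorphism condition, read in `C`, says exactly that `r` is a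
`Σ`-algebra homomorphism from `(Σ◇I, α_I)` into the determinised algebra `(SQ, δ̄)`, and its
compatibility with `i` says `r ∘ η_I = i`. By freeness of `Σ◇I`, `r` is then the reachability
map of the determinisation, so both languages are `ō ∘ r = V(o) ∘ r`.
-/

open CategoryTheory CategoryTheory.Limits

universe v u

namespace TreeAutPaper

variable {C : Type u} [Category.{v} C]

/-- The unit axiom of a distributive law `λ : ΣS ⇒ SΣ`. -/
def DistLawUnit (T : Monad C) (Sg : C ⥤ C)
    (l : (T : C ⥤ C) ⋙ Sg ⟶ Sg ⋙ (T : C ⥤ C)) : Prop :=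
  ∀ X : C, Sg.map (T.η.app X) ≫ l.app X = T.η.app (Sg.obj X)

/-- The multiplication axiom of a distributive law `λ : ΣS ⇒ SΣ`. -/
def DistLawMult (T : Monad C) (Sg : C ⥤ C)
    (l : (T : C ⥤ C) ⋙ Sg ⟶ Sg ⋙ (T : C ⥤ C)) : Prop :=
  ∀ X : C, Sg.map (T.μ.app X) ≫ l.app X =
    l.app ((T : C ⥤ C).obj X) ≫ (T : C ⥤ C).map (l.app X) ≫ T.μ.app (Sg.obj X)

/-- The extension `Σ̄ : Kl(S) ⥤ Kl(S)` of `Σ` corresponding to a distributive law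
`λ : ΣS ⇒ SΣ`: it acts as `Σ` on objects and sends `f : X ⇸ Y` to `λ_Y ∘ Σf`. -/
def kleisliExtension (T : Monad C) (Sg : C ⥤ C)
    (l : (T : C ⥤ C) ⋙ Sg ⟶ Sg ⋙ (T : C ⥤ C))
    (hη : DistLawUnit T Sg l) (hμ : DistLawMult T Sg l) :
    Kleisli T ⥤ Kleisli T where
  obj X := Kleisli.mk T (Sg.obj X.of)
  map {X Y} f := .mk (Sg.map f.of ≫ l.app Y.of : Sg.obj X.of ⟶ (T : C ⥤ C).obj (Sg.obj Y.of))
  map_id X := Kleisli.hom_ext (hη X.of)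
  map_comp {X Y Z} f g := by
    apply Kleisli.hom_ext
    show Sg.map (f.of ≫ (T : C ⥤ C).map g.of ≫ T.μ.app Z.of) ≫ l.app Z.of =
      (Sg.map f.of ≫ l.app Y.of) ≫ (T : C ⥤ C).map (Sg.map g.of ≫ l.app Z.of) ≫
        T.μ.app (Sg.obj Z.of)
    have hnat : Sg.map ((T : C ⥤ C).map g.of) ≫ l.app ((T : C ⥤ C).obj Z.of) =
        l.app Y.of ≫ (T : C ⥤ C).map (Sg.map g.of) := l.naturality g.of
    rw [Functor.map_comp, Functor.map_comp, Category.assoc, Category.assoc, hμ Z.of,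
      ← Category.assoc (Sg.map ((T : C ⥤ C).map g.of)), hnat]
    simp [Functor.map_comp]

def determinisationAlgebra (T : Monad C) {Sg : C ⥤ C}
    (l : (T : C ⥤ C) ⋙ Sg ⟶ Sg ⋙ (T : C ⥤ C)) {Q : C} (δ : Sg.obj Q ⟶ (T : C ⥤ C).obj Q) :
    Endofunctor.Algebra Sg :=
  ⟨(T : C ⥤ C).obj Q, l.app Q ≫ (T : C ⥤ C).map δ ≫ T.μ.app Q⟩

lemma unit_comp_map_comp_mu (T : Monad C) {X Y : C} (f : X ⟶ (T : C ⥤ C).obj Y) :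
    T.η.app X ≫ (T : C ⥤ C).map f ≫ T.μ.app Y = f := by
  rw [← Category.assoc, ← T.η.naturality f, Functor.id_map, Category.assoc, Monad.left_unit,
    Category.comp_id]

lemma determinisationAlgebra_hom_iff (T : Monad C) {Sg : C ⥤ C}
    (l : (T : C ⥤ C) ⋙ Sg ⟶ Sg ⋙ (T : C ⥤ C)) {Q : C} (δ : Sg.obj Q ⟶ (T : C ⥤ C).obj Q)
    (A : Endofunctor.Algebra Sg) (r : A.a ⟶ (T : C ⥤ C).obj Q) :
    Sg.map r ≫ (determinisationAlgebra T l δ).str = A.str ≫ r ↔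
      Sg.map r ≫ l.app Q ≫ (T : C ⥤ C).map δ ≫ T.μ.app Q =
        (A.str ≫ T.η.app A.a) ≫ (T : C ⥤ C).map r ≫ T.μ.app Q := by
  rw [Category.assoc, unit_comp_map_comp_mu]
  rfl

theorem determinisation_correct_general
    {C : Type u} [Category.{v} C] (T : Monad C) {Sg : C ⥤ C}
    (Fr : C ⥤ Endofunctor.Algebra Sg) (adjS : Fr ⊣ Endofunctor.Algebra.forget Sg)
    (l : (T : C ⥤ C) ⋙ Sg ⟶ Sg ⋙ (T : C ⥤ C))
    {I O : C} (Q : C) (δ : Sg.obj Q ⟶ (T : C ⥤ C).obj Q)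
    (i : I ⟶ (T : C ⥤ C).obj Q) (o : Q ⟶ (T : C ⥤ C).obj O)
    -- the reachability map of `(Q,δ,i,o)` in the Kleisli category:
    (rchK : (Fr.obj I).a ⟶ (T : C ⥤ C).obj Q)
    -- it is a `Σ̄`-algebra homomorphism `(Σ◇I, J(α_I)) ⟶ (Q,δ)` in `Kl(S)` …
    (hhom : Sg.map rchK ≫ l.app Q ≫ (T : C ⥤ C).map δ ≫ T.μ.app Q =
      ((Fr.obj I).str ≫ T.η.app (Fr.obj I).a) ≫ (T : C ⥤ C).map rchK ≫ T.μ.app Q)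
    -- … compatible with the initial states: `rchK ∘ J(η_I) = i` in `Kl(S)`:
    (hinit : (adjS.unit.app I ≫ T.η.app (Fr.obj I).a) ≫
        (T : C ⥤ C).map rchK ≫ T.μ.app Q = i) :
    -- language of the determinisation `(SQ, δ̄, i, ō)` in `C`
    ((adjS.homEquiv I (⟨(T : C ⥤ C).obj Q,
          l.app Q ≫ (T : C ⥤ C).map δ ≫ T.μ.app Q⟩ :
        Endofunctor.Algebra Sg)).symm i).f ≫ ((T : C ⥤ C).map o ≫ T.μ.app O) =
      -- equals the language `o ∘ rchK` of `(Q,δ,i,o)` in `Kl(S)`, viewed in `C`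
      rchK ≫ (T : C ⥤ C).map o ≫ T.μ.app O := by
  have hunit : adjS.unit.app I ≫ rchK = i :=
    calc adjS.unit.app I ≫ rchK
        = adjS.unit.app I ≫ T.η.app _ ≫ (T : C ⥤ C).map rchK ≫ T.μ.app Q :=
          congrArg (adjS.unit.app I ≫ ·) (unit_comp_map_comp_mu T rchK).symm
      _ = i := (Category.assoc _ _ _).symm.trans hinit
  let reach : Fr.obj I ⟶ determinisationAlgebra T l δ :=
    ⟨rchK, (determinisationAlgebra_hom_iff T l δ (Fr.obj I) rchK).mpr hhom⟩
  have hreach : (adjS.homEquiv I (determinisationAlgebra T l δ)).symm i = reach :=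
    (Equiv.symm_apply_eq _).mpr (by rw [Adjunction.homEquiv_unit]; exact hunit.symm)
  exact congrArg (fun m => m.f ≫ (T : C ⥤ C).map o ≫ T.μ.app O) hreach

/-- **correctness of determinisation.** Let `Σ` be a varietor with free
algebras `(Σ◇X, α_X)`, `S` a monad, and `Σ̄` the extension of `Σ` to `Kl(S)` given by
the distributive law `λ`. For a `(Σ,S)`-tree automaton `(Q,δ,i,o)`, the language of
its determinisation `(SQ, δ̄, i, ō)` — a `Σ`-tree automaton in `C` with output `SO`,
where `δ̄ = V(δ) ∘ λ_Q` and `ō = V(o)` — equals the language of `(Q,δ,i,o)` as a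
`Σ̄`-tree automaton in `Kl(S)`, viewed as a morphism `Σ◇I ⟶ SO` of `C`. Here `rchK`
is the reachability map of `(Q,δ,i,o)` in `Kl(S)`: the (unique) `Σ̄`-algebra
homomorphism from the free `Σ̄`-algebra `(Σ◇I, J(α_I))` to `(Q,δ)` compatible with the
initial states; all composites in `Kl(S)` are spelled out as `f ≫ S(g) ≫ μ` in `C`. -/
theorem determinisation_correct
    {C : Type u} [Category.{v} C] (T : Monad C) {Sg : C ⥤ C}
    (Fr : C ⥤ Endofunctor.Algebra Sg) (adjS : Fr ⊣ Endofunctor.Algebra.forget Sg)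
    (l : (T : C ⥤ C) ⋙ Sg ⟶ Sg ⋙ (T : C ⥤ C))
    (hη : DistLawUnit T Sg l) (hμ : DistLawMult T Sg l)
    {I O : C} (Q : C) (δ : Sg.obj Q ⟶ (T : C ⥤ C).obj Q)
    (i : I ⟶ (T : C ⥤ C).obj Q) (o : Q ⟶ (T : C ⥤ C).obj O)
    -- the reachability map of `(Q,δ,i,o)` in the Kleisli category:
    (rchK : (Fr.obj I).a ⟶ (T : C ⥤ C).obj Q)
    -- it is a `Σ̄`-algebra homomorphism `(Σ◇I, J(α_I)) ⟶ (Q,δ)` in `Kl(S)` …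
    (hhom : Sg.map rchK ≫ l.app Q ≫ (T : C ⥤ C).map δ ≫ T.μ.app Q =
      ((Fr.obj I).str ≫ T.η.app (Fr.obj I).a) ≫ (T : C ⥤ C).map rchK ≫ T.μ.app Q)
    -- … compatible with the initial states: `rchK ∘ J(η_I) = i` in `Kl(S)`:
    (hinit : (adjS.unit.app I ≫ T.η.app (Fr.obj I).a) ≫
        (T : C ⥤ C).map rchK ≫ T.μ.app Q = i) :
    -- language of the determinisation `(SQ, δ̄, i, ō)` in `C`
    ((adjS.homEquiv I (⟨(T : C ⥤ C).obj Q,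
          l.app Q ≫ (T : C ⥤ C).map δ ≫ T.μ.app Q⟩ :
        Endofunctor.Algebra Sg)).symm i).f ≫ ((T : C ⥤ C).map o ≫ T.μ.app O) =
      -- equals the language `o ∘ rchK` of `(Q,δ,i,o)` in `Kl(S)`, viewed in `C`
      rchK ≫ (T : C ⥤ C).map o ≫ T.μ.app O :=
  determinisation_correct_general T Fr adjS l Q δ i o rchK hhom hinit

end TreeAutPaper
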